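/- For each n ≥ 1, define σ_n(δ) = sup over finite sets 𝒰 and distributions p(u,x₁ⁿ,x₂ⁿ) with I(X₁ⁿ;X₂ⁿ|U) ≤ nδ of (1/n)I(X₁ⁿ,X₂ⁿ;Yⁿ|U), where Yⁿ is the output of a memoryless channel p(yⁿ|x₁ⁿ,x₂ⁿ) = Π_t p(y_t|x_{1,t},x_{2,t}). Then for all m,n ≥ 1 and δ ≥ 0: (m+n)·σ_{m+n}(δ) ≥ m·σ_m(δ) + n·σ_n(δ). -/

import Mathlib

/-!
Take feasible laws `p` for blocklength `m` (auxiliary alphabet `Fin k`) and `q` for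
blocklength `n` (`Fin l`) and let them act independently on the first `m` and the last `n`
letters of a block of length `m + n`, with auxiliary variable `(U₁, U₂) ∈ Fin (k * l)`.
Conditional mutual information is additive over independent blocks, and since the channel
is memoryless the outputs of the two halves stay independent. So the new law satisfies
`I(X₁;X₂|U) ≤ (m + n) δ`, and its value of `I(X₁X₂;Y|U)` is the sum of those of `p` and `q`.

Because `sSup` of a set of reals is `0` when the set is empty or unbounded, one also needs
that the feasible sets are bounded above (`I(A;B|C) ≤ log |B|`) and nonempty (point masses)
unless an input alphabet is empty, in which case all three `σ`'s are `0`.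
-/

open scoped BigOperators Classical

/-- Probability that the random variable `A` takes the value `a`, under the pmf `p`
on a finite sample space `Ω`. -/
noncomputable def prOf {Ω α : Type*} [Fintype Ω] (p : Ω → ℝ) (A : Ω → α) (a : α) : ℝ :=
  ∑ ω, if A ω = a then p ω else 0

/-- `p` is a probability mass function on the finite type `Ω`. -/
def IsPmf {Ω : Type*} [Fintype Ω] (p : Ω → ℝ) : Prop :=
  (∀ ω, 0 ≤ p ω) ∧ ∑ ω, p ω = 1

/-- Mutual information `I(A;B)` (base-2 logarithm) of random variables `A, B`
on a finite probability space `(Ω, p)`. -/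
noncomputable def mutualInfo {Ω α β : Type*} [Fintype Ω] [Fintype α] [Fintype β]
    (p : Ω → ℝ) (A : Ω → α) (B : Ω → β) : ℝ :=
  ∑ a, ∑ b, prOf p (fun ω => (A ω, B ω)) (a, b) *
    Real.logb 2 (prOf p (fun ω => (A ω, B ω)) (a, b) / (prOf p A a * prOf p B b))

/-- Conditional mutual information `I(A;B|C)` (base-2 logarithm). -/
noncomputable def condMutualInfo {Ω α β γ : Type*} [Fintype Ω] [Fintype α] [Fintype β]
    [Fintype γ] (p : Ω → ℝ) (A : Ω → α) (B : Ω → β) (C : Ω → γ) : ℝ :=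
  ∑ a, ∑ b, ∑ c, prOf p (fun ω => (A ω, B ω, C ω)) (a, b, c) *
    Real.logb 2 (prOf p (fun ω => (A ω, B ω, C ω)) (a, b, c) * prOf p C c /
      (prOf p (fun ω => (A ω, C ω)) (a, c) * prOf p (fun ω => (B ω, C ω)) (b, c)))

variable {𝒳₁ 𝒳₂ 𝒴 : Type} [Fintype 𝒳₁] [Fintype 𝒳₂] [Fintype 𝒴]

/-- Joint distribution of `(U, X₁ⁿ, X₂ⁿ, Yⁿ)` obtained by sending the inputs through
`n` memoryless uses of the channel `W`. -/
noncomputable def jointWithOutput (W : 𝒳₁ × 𝒳₂ → 𝒴 → ℝ) (n : ℕ) {𝒰 : Type}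
    (p : 𝒰 × (Fin n → 𝒳₁) × (Fin n → 𝒳₂) → ℝ) :
    𝒰 × (Fin n → 𝒳₁) × (Fin n → 𝒳₂) × (Fin n → 𝒴) → ℝ :=
  fun z => p (z.1, z.2.1, z.2.2.1) * ∏ t, W (z.2.1 t, z.2.2.1 t) (z.2.2.2 t)

/-- The `n`-letter function `σ_n(δ)`: the supremum over all finite auxiliary alphabets
`𝒰` (wlog `Fin k`) and joint distributions `p(u, x₁ⁿ, x₂ⁿ)` with `I(X₁ⁿ;X₂ⁿ|U) ≤ nδ`
of `(1/n)·I(X₁ⁿ,X₂ⁿ;Yⁿ|U)`. -/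
noncomputable def sigman (W : 𝒳₁ × 𝒳₂ → 𝒴 → ℝ) (n : ℕ) (δ : ℝ) : ℝ :=
  sSup {r : ℝ | ∃ (k : ℕ) (p : Fin k × (Fin n → 𝒳₁) × (Fin n → 𝒳₂) → ℝ),
    IsPmf p ∧
    condMutualInfo p (fun z => z.2.1) (fun z => z.2.2) (fun z => z.1) ≤ n * δ ∧
    r = (1 / n) * condMutualInfo (jointWithOutput W n p)
      (fun z => (z.2.1, z.2.2.1)) (fun z => z.2.2.2) (fun z => z.1)}

namespace Real

theorem sum_mul_log_div_le_log_sum {ι : Type*} [Fintype ι] {P Q : ι → ℝ}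
    (hP : ∀ i, 0 ≤ P i) (hQ : ∀ i, 0 ≤ Q i) (hPQ : ∀ i, 0 < P i → 0 < Q i)
    (hP1 : ∑ i, P i = 1) :
    ∑ i, P i * log (Q i / P i) ≤ log (∑ i, Q i) := by
  set K := ∑ i, Q i
  have hK : 0 < K := by
    obtain ⟨i, hi⟩ : ∃ i, 0 < P i := by
      by_contra! h
      linarith [Finset.sum_nonpos fun i (_ : i ∈ Finset.univ) => h i]
    exact (hPQ i hi).trans_le (Finset.single_le_sum (fun j _ => hQ j) (Finset.mem_univ i))
  -- `log y ≤ y - 1` at `y = Q i / (K * P i)`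
  have hterm : ∀ i, P i * log (Q i / P i) ≤ P i * log K + (Q i / K - P i) := by
    intro i
    rcases (hP i).eq_or_lt with h | h
    · rw [← h]
      simpa using div_nonneg (hQ i) hK.le
    have hQi := hPQ i h
    have hlog := log_le_sub_one_of_pos (x := Q i / (K * P i)) (by positivity)
    have hsplit : log (Q i / P i) = log (Q i / (K * P i)) + log K := by
      rw [← log_mul (by positivity) hK.ne']
      congr 1
      field_simp
    calc P i * log (Q i / P i) = P i * log (Q i / (K * P i)) + P i * log K := by
          rw [hsplit, mul_add]
      _ ≤ P i * (Q i / (K * P i) - 1) + P i * log K := by gcongr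
      _ = P i * log K + (Q i / K - P i) := by field_simp; ring
  calc ∑ i, P i * log (Q i / P i) ≤ ∑ i, (P i * log K + (Q i / K - P i)) :=
        Finset.sum_le_sum fun i _ => hterm i
    _ = log K := by
        rw [Finset.sum_add_distrib, Finset.sum_sub_distrib, ← Finset.sum_mul, ← Finset.sum_div,
          hP1, div_self hK.ne']
        ring

theorem mul_sSup_le {S : Set ℝ} (hS : S.Nonempty) {a c : ℝ} (ha : 0 ≤ a)
    (h : ∀ r ∈ S, a * r ≤ c) : a * sSup S ≤ c := by
  rw [← smul_eq_mul, ← sSup_smul_of_nonneg ha]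
  exact csSup_le hS.smul_set fun _ ⟨r, hr, hrc⟩ => hrc ▸ h r hr

theorem mul_sSup_add_mul_sSup_le {S T : Set ℝ} (hS : S.Nonempty) (hT : T.Nonempty)
    {a b c : ℝ} (ha : 0 ≤ a) (hb : 0 ≤ b) (h : ∀ r ∈ S, ∀ s ∈ T, a * r + b * s ≤ c) :
    a * sSup S + b * sSup T ≤ c := by
  suffices a * sSup S ≤ c - b * sSup T by linarith
  refine mul_sSup_le hS ha fun r hr => le_sub_comm.1 ?_
  exact mul_sSup_le hT hb fun s hs => by linarith [h r hr s hs]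

end Real

section prOf

variable {Ω Ω' Ω₁ Ω₂ α α' β : Type*} [Fintype Ω] [Fintype Ω'] [Fintype Ω₁] [Fintype Ω₂]

theorem IsPmf.nonempty {p : Ω → ℝ} (hp : IsPmf p) : Nonempty Ω := by
  by_contra h
  rw [not_nonempty_iff] at h
  simpa using hp.2

theorem IsPmf.prod {p : Ω₁ → ℝ} {q : Ω₂ → ℝ} (hp : IsPmf p) (hq : IsPmf q) :
    IsPmf fun ω : Ω₁ × Ω₂ => p ω.1 * q ω.2 :=
  ⟨fun _ => mul_nonneg (hp.1 _) (hq.1 _), by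
    rw [Fintype.sum_prod_type, ← Finset.sum_mul_sum, hp.2, hq.2, one_mul]⟩

theorem IsPmf.comp_equiv {p : Ω' → ℝ} (hp : IsPmf p) (e : Ω ≃ Ω') : IsPmf fun ω => p (e ω) :=
  ⟨fun _ => hp.1 _, (e.sum_comp p).trans hp.2⟩

theorem prOf_nonneg {p : Ω → ℝ} (hp : ∀ ω, 0 ≤ p ω) (A : Ω → α) (a : α) :
    0 ≤ prOf p A a :=
  Finset.sum_nonneg fun ω _ => by split_ifs <;> simp [hp ω]

theorem prOf_mono {p : Ω → ℝ} (hp : ∀ ω, 0 ≤ p ω) {A : Ω → α} {B : Ω → β} {a : α} {b : β}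
    (h : ∀ ω, A ω = a → B ω = b) : prOf p A a ≤ prOf p B b :=
  Finset.sum_le_sum fun ω _ => by
    by_cases hA : A ω = a
    · simp [hA, h ω hA]
    · split_ifs <;> simp [hp ω]

theorem le_prOf_apply {p : Ω → ℝ} (hp : ∀ ω, 0 ≤ p ω) (A : Ω → α) (ω : Ω) :
    p ω ≤ prOf p A (A ω) := by
  simpa [prOf] using Finset.single_le_sum (f := fun ω' => if A ω' = A ω then p ω' else 0)
    (fun ω' _ => by split_ifs <;> simp [hp ω']) (Finset.mem_univ ω)

theorem prOf_apply_pos {p : Ω → ℝ} (hp : ∀ ω, 0 ≤ p ω) (A : Ω → α) {ω : Ω} (hω : 0 < p ω) :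
    0 < prOf p A (A ω) :=
  hω.trans_le (le_prOf_apply hp A ω)

theorem sum_prOf_mul [Fintype α] (p : Ω → ℝ) (A : Ω → α) (f : α → ℝ) :
    ∑ a, prOf p A a * f a = ∑ ω, p ω * f (A ω) := by
  simp only [prOf, Finset.sum_mul, ite_mul, zero_mul]
  rw [Finset.sum_comm]
  simp

theorem sum_prOf [Fintype α] (p : Ω → ℝ) (A : Ω → α) : ∑ a, prOf p A a = ∑ ω, p ω := by
  simpa using sum_prOf_mul p A 1

theorem prOf_prod_of_iff (p : Ω₁ → ℝ) (q : Ω₂ → ℝ) {X : Ω₁ × Ω₂ → α} {x : α}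
    {F : Ω₁ → α'} {G : Ω₂ → β} {a : α'} {b : β}
    (h : ∀ ω₁ ω₂, X (ω₁, ω₂) = x ↔ F ω₁ = a ∧ G ω₂ = b) :
    prOf (fun ω => p ω.1 * q ω.2) X x = prOf p F a * prOf q G b := by
  simp only [prOf, Fintype.sum_prod_type, Finset.sum_mul_sum, h]
  refine Finset.sum_congr rfl fun ω₁ _ => Finset.sum_congr rfl fun ω₂ _ => ?_
  by_cases h₁ : F ω₁ = a <;> by_cases h₂ : G ω₂ = b <;> simp [h₁, h₂]

theorem prOf_comp_equiv (e : Ω ≃ Ω') (p : Ω' → ℝ) {A : Ω → α} {A' : Ω' → α'} {a : α} {a' : α'}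
    (h : ∀ ω, A' (e ω) = a' ↔ A ω = a) :
    prOf (fun ω => p (e ω)) A a = prOf p A' a' := by
  rw [prOf, prOf, ← e.sum_comp]
  simp only [h]

theorem prOf_dirac [DecidableEq Ω] (ω₀ : Ω) (A : Ω → α) :
    prOf (fun ω => if ω = ω₀ then (1 : ℝ) else 0) A (A ω₀) = 1 := by
  rw [prOf, Finset.sum_eq_single ω₀ (fun ω _ h => by simp [h]) (by simp)]
  simp

end prOf

section condMutualInfo

variable {Ω Ω' Ω₁ Ω₂ α β γ α' β' γ' α₁ β₁ γ₁ α₂ β₂ γ₂ : Type*}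
  [Fintype Ω] [Fintype Ω'] [Fintype Ω₁] [Fintype Ω₂]

noncomputable def condMutualInfoRatio (p : Ω → ℝ) (A : Ω → α) (B : Ω → β) (C : Ω → γ)
    (ω : Ω) : ℝ :=
  prOf p (fun ω => (A ω, B ω, C ω)) (A ω, B ω, C ω) * prOf p C (C ω) /
    (prOf p (fun ω => (A ω, C ω)) (A ω, C ω) * prOf p (fun ω => (B ω, C ω)) (B ω, C ω))

theorem condMutualInfoRatio_pos {p : Ω → ℝ} (hp : ∀ ω, 0 ≤ p ω) (A : Ω → α) (B : Ω → β)
    (C : Ω → γ) {ω : Ω} (hω : 0 < p ω) : 0 < condMutualInfoRatio p A B C ω := by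
  have := prOf_apply_pos hp (fun ω => (A ω, B ω, C ω)) hω
  have := prOf_apply_pos hp C hω
  have := prOf_apply_pos hp (fun ω => (A ω, C ω)) hω
  have := prOf_apply_pos hp (fun ω => (B ω, C ω)) hω
  unfold condMutualInfoRatio
  positivity

theorem condMutualInfoRatio_le {p : Ω → ℝ} (hp : ∀ ω, 0 ≤ p ω) (A : Ω → α) (B : Ω → β)
    (C : Ω → γ) {ω : Ω} (hω : 0 < p ω) :
    condMutualInfoRatio p A B C ω ≤ prOf p C (C ω) / prOf p (fun ω => (B ω, C ω)) (B ω, C ω) := by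
  have hAC := prOf_apply_pos hp (fun ω => (A ω, C ω)) hω
  have hABC : prOf p (fun ω => (A ω, B ω, C ω)) (A ω, B ω, C ω) ≤
      prOf p (fun ω => (A ω, C ω)) (A ω, C ω) :=
    prOf_mono hp fun ω' h => by simp_all
  calc condMutualInfoRatio p A B C ω
      = prOf p (fun ω => (A ω, B ω, C ω)) (A ω, B ω, C ω) /
          prOf p (fun ω => (A ω, C ω)) (A ω, C ω) *
        (prOf p C (C ω) / prOf p (fun ω => (B ω, C ω)) (B ω, C ω)) := mul_div_mul_comm _ _ _ _
    _ ≤ 1 * (prOf p C (C ω) / prOf p (fun ω => (B ω, C ω)) (B ω, C ω)) := by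
      gcongr
      · exact div_nonneg (prOf_nonneg hp _ _) (prOf_nonneg hp _ _)
      · exact div_le_one_of_le₀ hABC hAC.le
    _ = _ := one_mul _

theorem condMutualInfoRatio_prod (p : Ω₁ → ℝ) (q : Ω₂ → ℝ)
    (A₁ : Ω₁ → α₁) (B₁ : Ω₁ → β₁) (C₁ : Ω₁ → γ₁) (A₂ : Ω₂ → α₂) (B₂ : Ω₂ → β₂) (C₂ : Ω₂ → γ₂)
    (ω : Ω₁ × Ω₂) :
    condMutualInfoRatio (fun ω => p ω.1 * q ω.2) (fun ω => (A₁ ω.1, A₂ ω.2))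
        (fun ω => (B₁ ω.1, B₂ ω.2)) (fun ω => (C₁ ω.1, C₂ ω.2)) ω =
      condMutualInfoRatio p A₁ B₁ C₁ ω.1 * condMutualInfoRatio q A₂ B₂ C₂ ω.2 := by
  have hABC : prOf (fun ω' : Ω₁ × Ω₂ => p ω'.1 * q ω'.2)
      (fun ω' => ((A₁ ω'.1, A₂ ω'.2), (B₁ ω'.1, B₂ ω'.2), (C₁ ω'.1, C₂ ω'.2)))
        ((A₁ ω.1, A₂ ω.2), (B₁ ω.1, B₂ ω.2), (C₁ ω.1, C₂ ω.2)) =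
      prOf p (fun ω' => (A₁ ω', B₁ ω', C₁ ω')) (A₁ ω.1, B₁ ω.1, C₁ ω.1) *
        prOf q (fun ω' => (A₂ ω', B₂ ω', C₂ ω')) (A₂ ω.2, B₂ ω.2, C₂ ω.2) :=
    prOf_prod_of_iff p q fun _ _ => by simp only [Prod.mk.injEq]; tauto
  have hAC : prOf (fun ω' : Ω₁ × Ω₂ => p ω'.1 * q ω'.2)
      (fun ω' => ((A₁ ω'.1, A₂ ω'.2), (C₁ ω'.1, C₂ ω'.2))) ((A₁ ω.1, A₂ ω.2), (C₁ ω.1, C₂ ω.2)) =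
      prOf p (fun ω' => (A₁ ω', C₁ ω')) (A₁ ω.1, C₁ ω.1) *
        prOf q (fun ω' => (A₂ ω', C₂ ω')) (A₂ ω.2, C₂ ω.2) :=
    prOf_prod_of_iff p q fun _ _ => by simp only [Prod.mk.injEq]; tauto
  have hBC : prOf (fun ω' : Ω₁ × Ω₂ => p ω'.1 * q ω'.2)
      (fun ω' => ((B₁ ω'.1, B₂ ω'.2), (C₁ ω'.1, C₂ ω'.2))) ((B₁ ω.1, B₂ ω.2), (C₁ ω.1, C₂ ω.2)) =
      prOf p (fun ω' => (B₁ ω', C₁ ω')) (B₁ ω.1, C₁ ω.1) *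
        prOf q (fun ω' => (B₂ ω', C₂ ω')) (B₂ ω.2, C₂ ω.2) :=
    prOf_prod_of_iff p q fun _ _ => by simp only [Prod.mk.injEq]; tauto
  have hC : prOf (fun ω' : Ω₁ × Ω₂ => p ω'.1 * q ω'.2) (fun ω' => (C₁ ω'.1, C₂ ω'.2))
      (C₁ ω.1, C₂ ω.2) = prOf p C₁ (C₁ ω.1) * prOf q C₂ (C₂ ω.2) :=
    prOf_prod_of_iff p q fun _ _ => Prod.mk_inj
  simp only [condMutualInfoRatio, hABC, hAC, hBC, hC]
  ring

variable [Fintype α] [Fintype β] [Fintype γ] [Fintype α'] [Fintype β'] [Fintype γ']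
  [Fintype α₁] [Fintype β₁] [Fintype γ₁] [Fintype α₂] [Fintype β₂] [Fintype γ₂]

theorem condMutualInfo_eq_sum (p : Ω → ℝ) (A : Ω → α) (B : Ω → β) (C : Ω → γ) :
    condMutualInfo p A B C = ∑ ω, p ω * Real.logb 2 (condMutualInfoRatio p A B C ω) := by
  simp only [condMutualInfoRatio]
  rw [← sum_prOf_mul p (fun ω => (A ω, B ω, C ω))
    (fun x => Real.logb 2 (prOf p (fun ω => (A ω, B ω, C ω)) x * prOf p C x.2.2 /
      (prOf p (fun ω => (A ω, C ω)) (x.1, x.2.2) * prOf p (fun ω => (B ω, C ω)) (x.2.1, x.2.2))))]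
  simp only [condMutualInfo, Fintype.sum_prod_type]

/-- `I(A;B|C) ≤ H(B|C) ≤ log |β|`; the second step is Gibbs' inequality. -/
theorem condMutualInfo_le_logb_card {p : Ω → ℝ} (hp : IsPmf p)
    (A : Ω → α) (B : Ω → β) (C : Ω → γ) :
    condMutualInfo p A B C ≤ Real.logb 2 (Fintype.card β) := by
  set P : β × γ → ℝ := prOf p (fun ω => (B ω, C ω))
  set Q : β × γ → ℝ := fun x => prOf p C x.2
  have hPQ : ∀ x, P x ≤ Q x := fun x => prOf_mono hp.1 fun ω h => by simp [← h]
  have hQ : ∑ x, Q x = Fintype.card β := by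
    simp [Q, Fintype.sum_prod_type, sum_prOf, hp.2]
  calc condMutualInfo p A B C = ∑ ω, p ω * Real.logb 2 (condMutualInfoRatio p A B C ω) :=
        condMutualInfo_eq_sum p A B C
    _ ≤ ∑ ω, p ω * Real.logb 2 (Q (B ω, C ω) / P (B ω, C ω)) := by
        refine Finset.sum_le_sum fun ω _ => ?_
        rcases (hp.1 ω).eq_or_lt with h | h
        · simp [← h]
        exact mul_le_mul_of_nonneg_left (Real.logb_le_logb_of_le one_lt_two
          (condMutualInfoRatio_pos hp.1 A B C h) (condMutualInfoRatio_le hp.1 A B C h)) h.le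
    _ = (∑ x, P x * Real.log (Q x / P x)) / Real.log 2 := by
        rw [← sum_prOf_mul p (fun ω => (B ω, C ω)) fun x => Real.logb 2 (Q x / P x),
          Finset.sum_div]
        simp only [Real.logb, mul_div_assoc]
        rfl
    _ ≤ Real.log (∑ x, Q x) / Real.log 2 := by
        gcongr
        exact Real.sum_mul_log_div_le_log_sum (prOf_nonneg hp.1 _) (fun x => prOf_nonneg hp.1 _ _)
          (fun x hx => hx.trans_le (hPQ x)) ((sum_prOf _ _).trans hp.2)
    _ = Real.logb 2 (Fintype.card β) := by rw [hQ, Real.log_div_log]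

theorem condMutualInfo_prod {p : Ω₁ → ℝ} {q : Ω₂ → ℝ} (hp : IsPmf p) (hq : IsPmf q)
    (A₁ : Ω₁ → α₁) (B₁ : Ω₁ → β₁) (C₁ : Ω₁ → γ₁) (A₂ : Ω₂ → α₂) (B₂ : Ω₂ → β₂) (C₂ : Ω₂ → γ₂) :
    condMutualInfo (fun ω : Ω₁ × Ω₂ => p ω.1 * q ω.2) (fun ω => (A₁ ω.1, A₂ ω.2))
        (fun ω => (B₁ ω.1, B₂ ω.2)) (fun ω => (C₁ ω.1, C₂ ω.2)) =
      condMutualInfo p A₁ B₁ C₁ + condMutualInfo q A₂ B₂ C₂ := by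
  have hterm : ∀ ω₁ ω₂, p ω₁ * q ω₂ * Real.logb 2
      (condMutualInfoRatio p A₁ B₁ C₁ ω₁ * condMutualInfoRatio q A₂ B₂ C₂ ω₂) =
      q ω₂ * (p ω₁ * Real.logb 2 (condMutualInfoRatio p A₁ B₁ C₁ ω₁)) +
        p ω₁ * (q ω₂ * Real.logb 2 (condMutualInfoRatio q A₂ B₂ C₂ ω₂)) := by
    intro ω₁ ω₂
    rcases (hp.1 ω₁).eq_or_lt with h₁ | h₁
    · simp [← h₁]
    rcases (hq.1 ω₂).eq_or_lt with h₂ | h₂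
    · simp [← h₂]
    rw [Real.logb_mul (condMutualInfoRatio_pos hp.1 A₁ B₁ C₁ h₁).ne'
      (condMutualInfoRatio_pos hq.1 A₂ B₂ C₂ h₂).ne']
    ring
  simp only [condMutualInfo_eq_sum, Fintype.sum_prod_type, condMutualInfoRatio_prod, hterm,
    Finset.sum_add_distrib, ← Finset.mul_sum, ← Finset.sum_mul, hp.2, hq.2, one_mul]

theorem condMutualInfo_comp_equiv (e : Ω ≃ Ω') (ea : α ≃ α') (eb : β ≃ β') (ec : γ ≃ γ')
    (p : Ω' → ℝ) {A : Ω → α} {B : Ω → β} {C : Ω → γ} {A' : Ω' → α'} {B' : Ω' → β'}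
    {C' : Ω' → γ'} (hA : ∀ ω, A' (e ω) = ea (A ω)) (hB : ∀ ω, B' (e ω) = eb (B ω))
    (hC : ∀ ω, C' (e ω) = ec (C ω)) :
    condMutualInfo (fun ω => p (e ω)) A B C = condMutualInfo p A' B' C' := by
  unfold condMutualInfo
  refine Fintype.sum_equiv ea _ _ fun a => Fintype.sum_equiv eb _ _ fun b =>
    Fintype.sum_equiv ec _ _ fun c => ?_
  rw [prOf_comp_equiv e p (A := fun ω => (A ω, B ω, C ω)) (a := (a, b, c))
      (A' := fun ω => (A' ω, B' ω, C' ω)) (a' := (ea a, eb b, ec c)) fun ω => by simp [hA, hB, hC],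
    prOf_comp_equiv e p (A := C) (a := c) (A' := C') (a' := ec c) fun ω => by simp [hC],
    prOf_comp_equiv e p (A := fun ω => (A ω, C ω)) (a := (a, c))
      (A' := fun ω => (A' ω, C' ω)) (a' := (ea a, ec c)) fun ω => by simp [hA, hC],
    prOf_comp_equiv e p (A := fun ω => (B ω, C ω)) (a := (b, c))
      (A' := fun ω => (B' ω, C' ω)) (a' := (eb b, ec c)) fun ω => by simp [hB, hC]]

theorem condMutualInfo_dirac [DecidableEq Ω] (ω₀ : Ω) (A : Ω → α) (B : Ω → β) (C : Ω → γ) :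
    condMutualInfo (fun ω => if ω = ω₀ then (1 : ℝ) else 0) A B C = 0 := by
  simp [condMutualInfo_eq_sum, condMutualInfoRatio, prOf_dirac]

end condMutualInfo

theorem sum_prod_channel_eq_one {X₁ X₂ Y : Type*} [Fintype Y] {W : X₁ × X₂ → Y → ℝ}
    (hW : ∀ x, IsPmf (W x)) {N : ℕ} (x₁ : Fin N → X₁) (x₂ : Fin N → X₂) :
    ∑ y : Fin N → Y, ∏ t, W (x₁ t, x₂ t) (y t) = 1 := by
  rw [← Fintype.prod_sum]
  simp [(hW _).2]

theorem isPmf_jointWithOutput {W : 𝒳₁ × 𝒳₂ → 𝒴 → ℝ} (hW : ∀ x, IsPmf (W x)) {N : ℕ}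
    {𝒰 : Type} [Fintype 𝒰] {p : 𝒰 × (Fin N → 𝒳₁) × (Fin N → 𝒳₂) → ℝ} (hp : IsPmf p) :
    IsPmf (jointWithOutput W N p) := by
  refine ⟨fun z => mul_nonneg (hp.1 _) (Finset.prod_nonneg fun t _ => (hW _).1 _), ?_⟩
  simp only [jointWithOutput, Fintype.sum_prod_type, ← Finset.mul_sum, sum_prod_channel_eq_one hW,
    mul_one]
  simpa only [Fintype.sum_prod_type] using hp.2

section blocks

variable {𝒰 𝒰₁ 𝒰₂ X₁ X₂ Y : Type}

def splitInputs (eU : 𝒰 ≃ 𝒰₁ × 𝒰₂) (m n : ℕ) :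
    𝒰 × (Fin (m + n) → X₁) × (Fin (m + n) → X₂) ≃
      (𝒰₁ × (Fin m → X₁) × (Fin m → X₂)) × (𝒰₂ × (Fin n → X₁) × (Fin n → X₂)) :=
  (eU.prodCongr (((Fin.appendEquiv m n).symm.prodCongr (Fin.appendEquiv m n).symm).trans
    (Equiv.prodProdProdComm _ _ _ _))).trans (Equiv.prodProdProdComm _ _ _ _)

def splitOutputs (eU : 𝒰 ≃ 𝒰₁ × 𝒰₂) (m n : ℕ) :
    𝒰 × (Fin (m + n) → X₁) × (Fin (m + n) → X₂) × (Fin (m + n) → Y) ≃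
      (𝒰₁ × (Fin m → X₁) × (Fin m → X₂) × (Fin m → Y)) ×
        (𝒰₂ × (Fin n → X₁) × (Fin n → X₂) × (Fin n → Y)) :=
  (eU.prodCongr (((Fin.appendEquiv m n).symm.prodCongr (((Fin.appendEquiv m n).symm.prodCongr
    (Fin.appendEquiv m n).symm).trans (Equiv.prodProdProdComm _ _ _ _))).trans
      (Equiv.prodProdProdComm _ _ _ _))).trans (Equiv.prodProdProdComm _ _ _ _)

/-- The first `m` and the last `n` letters are independent blocks with laws `p` and `q`;
the auxiliary variable is the pair `(U₁, U₂)`, encoded in `𝒰` through `eU`. -/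
noncomputable def blockProd (eU : 𝒰 ≃ 𝒰₁ × 𝒰₂) {m n : ℕ}
    (p : 𝒰₁ × (Fin m → X₁) × (Fin m → X₂) → ℝ) (q : 𝒰₂ × (Fin n → X₁) × (Fin n → X₂) → ℝ) :
    𝒰 × (Fin (m + n) → X₁) × (Fin (m + n) → X₂) → ℝ :=
  fun z => p (splitInputs eU m n z).1 * q (splitInputs eU m n z).2

theorem jointWithOutput_blockProd (W : X₁ × X₂ → Y → ℝ) (eU : 𝒰 ≃ 𝒰₁ × 𝒰₂) {m n : ℕ}
    (p : 𝒰₁ × (Fin m → X₁) × (Fin m → X₂) → ℝ) (q : 𝒰₂ × (Fin n → X₁) × (Fin n → X₂) → ℝ) :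
    jointWithOutput W (m + n) (blockProd eU p q) = fun z =>
      jointWithOutput W m p (splitOutputs eU m n z).1 *
        jointWithOutput W n q (splitOutputs eU m n z).2 := by
  funext z
  simp only [jointWithOutput, blockProd, Fin.prod_univ_add]
  simp [splitInputs, splitOutputs]
  ring

variable [Fintype 𝒰] [Fintype 𝒰₁] [Fintype 𝒰₂] [Fintype X₁] [Fintype X₂] {m n : ℕ}
  {p : 𝒰₁ × (Fin m → X₁) × (Fin m → X₂) → ℝ} {q : 𝒰₂ × (Fin n → X₁) × (Fin n → X₂) → ℝ}

theorem IsPmf.blockProd (eU : 𝒰 ≃ 𝒰₁ × 𝒰₂) (hp : IsPmf p) (hq : IsPmf q) :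
    IsPmf (blockProd eU p q) :=
  (hp.prod hq).comp_equiv (splitInputs eU m n)

theorem condMutualInfo_blockProd (eU : 𝒰 ≃ 𝒰₁ × 𝒰₂) (hp : IsPmf p) (hq : IsPmf q) :
    condMutualInfo (blockProd eU p q) (fun z => z.2.1) (fun z => z.2.2) (fun z => z.1) =
      condMutualInfo p (fun z => z.2.1) (fun z => z.2.2) (fun z => z.1) +
        condMutualInfo q (fun z => z.2.1) (fun z => z.2.2) (fun z => z.1) := by
  have h1 := condMutualInfo_comp_equiv (splitInputs eU m n) (Fin.appendEquiv m n).symm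
    (Fin.appendEquiv m n).symm eU (fun w => p w.1 * q w.2) (A' := fun w => (w.1.2.1, w.2.2.1))
    (B' := fun w => (w.1.2.2, w.2.2.2)) (C' := fun w => (w.1.1, w.2.1))
    (A := fun z => z.2.1) (B := fun z => z.2.2) (C := fun z => z.1)
    (fun _ => rfl) (fun _ => rfl) (fun _ => rfl)
  have h2 := condMutualInfo_prod hp hq (fun z => z.2.1) (fun z => z.2.2) (fun z => z.1)
    (fun z => z.2.1) (fun z => z.2.2) (fun z => z.1)
  exact h1.trans h2

theorem condMutualInfo_jointWithOutput_blockProd [Fintype Y] (W : X₁ × X₂ → Y → ℝ)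
    (hW : ∀ x, IsPmf (W x)) (eU : 𝒰 ≃ 𝒰₁ × 𝒰₂) (hp : IsPmf p) (hq : IsPmf q) :
    condMutualInfo (jointWithOutput W (m + n) (blockProd eU p q))
        (fun z => (z.2.1, z.2.2.1)) (fun z => z.2.2.2) (fun z => z.1) =
      condMutualInfo (jointWithOutput W m p) (fun z => (z.2.1, z.2.2.1)) (fun z => z.2.2.2)
          (fun z => z.1) +
        condMutualInfo (jointWithOutput W n q) (fun z => (z.2.1, z.2.2.1)) (fun z => z.2.2.2)
          (fun z => z.1) := by
  rw [jointWithOutput_blockProd]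
  have h1 := condMutualInfo_comp_equiv (splitOutputs eU m n)
    ((Fin.appendEquiv m n).symm.prodCongr (Fin.appendEquiv m n).symm |>.trans
      (Equiv.prodProdProdComm _ _ _ _))
    (Fin.appendEquiv m n).symm eU (fun w => jointWithOutput W m p w.1 * jointWithOutput W n q w.2)
    (A := fun z => (z.2.1, z.2.2.1)) (B := fun z => z.2.2.2) (C := fun z => z.1)
    (A' := fun w => ((w.1.2.1, w.1.2.2.1), (w.2.2.1, w.2.2.2.1)))
    (B' := fun w => (w.1.2.2.2, w.2.2.2.2)) (C' := fun w => (w.1.1, w.2.1))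
    (fun _ => rfl) (fun _ => rfl) (fun _ => rfl)
  have h2 := condMutualInfo_prod (isPmf_jointWithOutput hW hp) (isPmf_jointWithOutput hW hq)
    (fun z => (z.2.1, z.2.2.1)) (fun z => z.2.2.2) (fun z => z.1)
    (fun z => (z.2.1, z.2.2.1)) (fun z => z.2.2.2) (fun z => z.1)
  exact h1.trans h2

end blocks

def sigmanSet (W : 𝒳₁ × 𝒳₂ → 𝒴 → ℝ) (n : ℕ) (δ : ℝ) : Set ℝ :=
  {r : ℝ | ∃ (k : ℕ) (p : Fin k × (Fin n → 𝒳₁) × (Fin n → 𝒳₂) → ℝ),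
    IsPmf p ∧
    condMutualInfo p (fun z => z.2.1) (fun z => z.2.2) (fun z => z.1) ≤ n * δ ∧
    r = (1 / n) * condMutualInfo (jointWithOutput W n p)
      (fun z => (z.2.1, z.2.2.1)) (fun z => z.2.2.2) (fun z => z.1)}

theorem sigman_eq_sSup (W : 𝒳₁ × 𝒳₂ → 𝒴 → ℝ) (n : ℕ) (δ : ℝ) :
    sigman W n δ = sSup (sigmanSet W n δ) := rfl

theorem bddAbove_sigmanSet {W : 𝒳₁ × 𝒳₂ → 𝒴 → ℝ} (hW : ∀ x, IsPmf (W x)) (n : ℕ) (δ : ℝ) :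
    BddAbove (sigmanSet W n δ) := by
  refine ⟨1 / n * Real.logb 2 (Fintype.card (Fin n → 𝒴)), ?_⟩
  rintro _ ⟨k, p, hp, -, rfl⟩
  gcongr
  exact condMutualInfo_le_logb_card (isPmf_jointWithOutput hW hp) _ _ _

theorem sigmanSet_nonempty [Nonempty 𝒳₁] [Nonempty 𝒳₂] (W : 𝒳₁ × 𝒳₂ → 𝒴 → ℝ) (n : ℕ)
    {δ : ℝ} (hδ : 0 ≤ δ) : (sigmanSet W n δ).Nonempty := by
  obtain ⟨z₀⟩ : Nonempty (Fin 1 × (Fin n → 𝒳₁) × (Fin n → 𝒳₂)) := inferInstance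
  refine ⟨_, 1, fun z => if z = z₀ then 1 else 0, ⟨fun z => by positivity, by simp⟩, ?_, rfl⟩
  rw [condMutualInfo_dirac]
  positivity

theorem sigmanSet_eq_empty (W : 𝒳₁ × 𝒳₂ → 𝒴 → ℝ) {n : ℕ} (hn : 1 ≤ n) (δ : ℝ)
    (h : ¬(Nonempty 𝒳₁ ∧ Nonempty 𝒳₂)) : sigmanSet W n δ = ∅ := by
  refine Set.eq_empty_of_forall_notMem fun r ⟨k, p, hp, _⟩ => h ?_
  obtain ⟨z⟩ := hp.nonempty
  exact ⟨⟨z.2.1 ⟨0, hn⟩⟩, ⟨z.2.2 ⟨0, hn⟩⟩⟩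

theorem condMutualInfo_jointWithOutput_le_mul_sigman {W : 𝒳₁ × 𝒳₂ → 𝒴 → ℝ}
    (hW : ∀ x, IsPmf (W x)) {n : ℕ} (hn : 1 ≤ n) {δ : ℝ} {k : ℕ}
    {p : Fin k × (Fin n → 𝒳₁) × (Fin n → 𝒳₂) → ℝ} (hp : IsPmf p)
    (hpδ : condMutualInfo p (fun z => z.2.1) (fun z => z.2.2) (fun z => z.1) ≤ n * δ) :
    condMutualInfo (jointWithOutput W n p) (fun z => (z.2.1, z.2.2.1)) (fun z => z.2.2.2)
      (fun z => z.1) ≤ n * sigman W n δ := by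
  have hn' : (n : ℝ) ≠ 0 := by positivity
  calc _ = n * (1 / n * condMutualInfo (jointWithOutput W n p) (fun z => (z.2.1, z.2.2.1))
        (fun z => z.2.2.2) (fun z => z.1)) := by field_simp
    _ ≤ n * sigman W n δ := by
      gcongr
      exact le_csSup (bddAbove_sigmanSet hW n δ) ⟨k, p, hp, hpδ, rfl⟩

theorem mul_add_mul_le_of_mem_sigmanSet {W : 𝒳₁ × 𝒳₂ → 𝒴 → ℝ} (hW : ∀ x, IsPmf (W x))
    {m n : ℕ} (hm : 1 ≤ m) (hn : 1 ≤ n) {δ r s : ℝ} (hr : r ∈ sigmanSet W m δ)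
    (hs : s ∈ sigmanSet W n δ) :
    m * r + n * s ≤ ((m + n : ℕ) : ℝ) * sigman W (m + n) δ := by
  obtain ⟨k, p, hp, hpδ, rfl⟩ := hr
  obtain ⟨l, q, hq, hqδ, rfl⟩ := hs
  have hPδ : condMutualInfo (blockProd finProdFinEquiv.symm p q) (fun z => z.2.1)
      (fun z => z.2.2) (fun z => z.1) ≤ ((m + n : ℕ) : ℝ) * δ := by
    rw [condMutualInfo_blockProd finProdFinEquiv.symm hp hq]
    push_cast
    linarith
  have hm' : (m : ℝ) ≠ 0 := by positivity
  have hn' : (n : ℝ) ≠ 0 := by positivity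
  simp only [← mul_assoc, mul_one_div_cancel hm', mul_one_div_cancel hn', one_mul]
  rw [← condMutualInfo_jointWithOutput_blockProd W hW finProdFinEquiv.symm hp hq]
  exact condMutualInfo_jointWithOutput_le_mul_sigman hW (by omega) (hp.blockProd _ hq) hPδ

/-- Superadditivity: `(m+n)·σ_{m+n}(δ) ≥ m·σ_m(δ) + n·σ_n(δ)`. -/
theorem sigman_superadditive (W : 𝒳₁ × 𝒳₂ → 𝒴 → ℝ) (hW : ∀ x, IsPmf (W x))
    (m n : ℕ) (hm : 1 ≤ m) (hn : 1 ≤ n) (δ : ℝ) (hδ : 0 ≤ δ) :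
    (m : ℝ) * sigman W m δ + (n : ℝ) * sigman W n δ
      ≤ ((m + n : ℕ) : ℝ) * sigman W (m + n) δ := by
  by_cases hX : Nonempty 𝒳₁ ∧ Nonempty 𝒳₂
  · obtain ⟨_, _⟩ := hX
    exact Real.mul_sSup_add_mul_sSup_le (sigmanSet_nonempty W m hδ) (sigmanSet_nonempty W n hδ)
      m.cast_nonneg n.cast_nonneg fun r hr s hs => mul_add_mul_le_of_mem_sigmanSet hW hm hn hr hs
  · simp only [sigman_eq_sSup, sigmanSet_eq_empty W hm δ hX, sigmanSet_eq_empty W hn δ hX,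
      sigmanSet_eq_empty W (by omega : 1 ≤ m + n) δ hX, Real.sSup_empty, mul_zero, add_zero,
      le_refl]
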